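/- The matrix singular value thresholding operator solves the nuclear-norm proximal problem: for any matrix T ∈ ℝ^{m×n} with SVD T = UΣVᵀ and τ > 0, the matrix SVT_τ(T) := U·max(Σ−τ,0)·Vᵀ is the unique minimizer of X ↦ τ‖X‖_* + ½‖X−T‖_F². -/

import Mathlib

open Matrix

/-- The nuclear norm of a real matrix: the sum of its singular values,
realized as the square roots of the eigenvalues of `Aᴴ * A`. -/
noncomputable def nuclearNorm {m n : ℕ} (A : Matrix (Fin m) (Fin n) ℝ) : ℝ :=
  ∑ i, Real.sqrt ((Matrix.isHermitian_conjTranspose_mul_self A).eigenvalues i)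

/-- The Frobenius norm of a real matrix. -/
noncomputable def frobNorm {m n : ℕ} (A : Matrix (Fin m) (Fin n) ℝ) : ℝ :=
  Real.sqrt (∑ i, ∑ j, (A i j) ^ 2)

/-!
Both terms of the objective are invariant under `X ↦ Uᵀ X V`, so it suffices to treat `T = S`,
rectangular diagonal. The nuclear norm of `Y` dominates that of its diagonal part (pinching):
`∑ₖ |Yₖₖ| = tr (Aᵀ Y)` for the diagonal sign matrix `A` of `Y`, a contraction, and
`tr (Aᵀ Y) ≤ ‖Y‖_*` by Cauchy–Schwarz column by column in a basis of right singular vectors of `Y`.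
This decouples the objective into the scalar problems `τ |y| + ½ (y - s)²` on the diagonal (off
the diagonal only the quadratic term remains), each solved by soft thresholding `max (s - τ) 0`.
Every scalar objective is `1`-strongly convex, so `f X ≥ f (SVT_τ T) + ½ ‖X - SVT_τ T‖_F²`, which
also gives uniqueness.
-/

variable {m n : ℕ}

lemma sum_fin_eq_dite_of_eq_zero {M : Type*} [AddCommMonoid M] {f : Fin m → M} {k : ℕ}
    (hf : ∀ i : Fin m, (i : ℕ) ≠ k → f i = 0) :
    ∑ i, f i = if hk : k < m then f ⟨k, hk⟩ else 0 := by
  split_ifs with hk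
  · exact Fintype.sum_eq_single _ fun i hi => hf i fun h => hi (Fin.ext h)
  · exact Finset.sum_eq_zero fun i _ => hf i fun h => hk (h ▸ i.isLt)

lemma transpose_mul_self_apply_self {k : Type*} [Fintype k] (M : Matrix k (Fin n) ℝ)
    (j : Fin n) : (Mᵀ * M) j j = ∑ i, M i j ^ 2 := by
  simp only [mul_apply, transpose_apply, sq]

lemma transpose_mul_orthogonal_conj {U : Matrix (Fin m) (Fin m) ℝ} (hU : Uᵀ * U = 1)
    (Z : Matrix (Fin m) (Fin n) ℝ) (V : Matrix (Fin n) (Fin n) ℝ) :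
    (U * Z * Vᵀ)ᵀ * (U * Z * Vᵀ) = V * (Zᵀ * Z) * Vᵀ := by
  simp only [transpose_mul, transpose_transpose, Matrix.mul_assoc]
  rw [← Matrix.mul_assoc Uᵀ, hU, Matrix.one_mul]

section NuclearNorm

lemma nuclearNorm_eq_of_charpoly_eq {A B : Matrix (Fin m) (Fin n) ℝ}
    (h : (Aᵀ * A).charpoly = (Bᵀ * B).charpoly) : nuclearNorm A = nuclearNorm B := by
  simp only [← conjTranspose_eq_transpose_of_trivial] at h
  simp only [nuclearNorm,
    ((isHermitian_conjTranspose_mul_self A).eigenvalues_eq_eigenvalues_iff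
      (isHermitian_conjTranspose_mul_self B)).2 h]

lemma nuclearNorm_orthogonal_conj {U : Matrix (Fin m) (Fin m) ℝ} {V : Matrix (Fin n) (Fin n) ℝ}
    (hU : Uᵀ * U = 1) (hV : Vᵀ * V = 1) (Z : Matrix (Fin m) (Fin n) ℝ) :
    nuclearNorm (U * Z * Vᵀ) = nuclearNorm Z := by
  apply nuclearNorm_eq_of_charpoly_eq
  rw [transpose_mul_orthogonal_conj hU, Matrix.mul_assoc, charpoly_mul_comm, Matrix.mul_assoc,
    hV, Matrix.mul_one]

lemma nuclearNorm_eq_sum_sqrt_of_transpose_mul_self_eq_diagonal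
    {A : Matrix (Fin m) (Fin n) ℝ} {g : Fin n → ℝ} (h : Aᵀ * A = diagonal g) :
    nuclearNorm A = ∑ j, √(g j) := by
  have hchar : (Aᴴ * A).charpoly = ∏ j, (Polynomial.X - Polynomial.C (g j)) := by
    rw [conjTranspose_eq_transpose_of_trivial, h, charpoly_diagonal]
  have hroots := (isHermitian_conjTranspose_mul_self A).roots_charpoly_eq_eigenvalues
  rw [hchar, Polynomial.roots_prod _ _ (Polynomial.monic_prod_of_monic _ _
    fun j _ => Polynomial.monic_X_sub_C (g j)).ne_zero] at hroots
  simp only [Polynomial.roots_X_sub_C, Multiset.bind_singleton] at hroots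
  have hsum := congrArg (fun s => (s.map Real.sqrt).sum) hroots
  simp only [Multiset.map_map, RCLike.ofReal_real_eq_id, Function.id_comp] at hsum
  exact hsum.symm

lemma exists_orthogonal_transpose_mul_self_eq_diagonal (Y : Matrix (Fin m) (Fin n) ℝ) :
    ∃ W : Matrix (Fin n) (Fin n) ℝ, W * Wᵀ = 1 ∧ Wᵀ * W = 1 ∧
      (Y * W)ᵀ * (Y * W) = diagonal (isHermitian_conjTranspose_mul_self Y).eigenvalues := by
  set hY := isHermitian_conjTranspose_mul_self Y
  have hW := hY.eigenvectorUnitary.2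
  refine ⟨hY.eigenvectorUnitary, ?_, ?_, ?_⟩
  · simpa [star_eq_conjTranspose, conjTranspose_eq_transpose_of_trivial] using
      mem_unitaryGroup_iff.mp hW
  · simpa [star_eq_conjTranspose, conjTranspose_eq_transpose_of_trivial] using
      mem_unitaryGroup_iff'.mp hW
  · have hdiag := hY.conjStarAlgAut_star_eigenvectorUnitary
    simp only [Unitary.conjStarAlgAut_apply, Unitary.coe_star, star_eq_conjTranspose,
      conjTranspose_eq_transpose_of_trivial, transpose_transpose, RCLike.ofReal_real_eq_id,
      Function.id_comp] at hdiag
    rw [← hdiag, transpose_mul]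
    simp only [Matrix.mul_assoc]
    rfl

lemma trace_transpose_mul_le_nuclearNorm {A Y : Matrix (Fin m) (Fin n) ℝ}
    (hA : ∀ v, (A *ᵥ v) ⬝ᵥ (A *ᵥ v) ≤ v ⬝ᵥ v) : trace (Aᵀ * Y) ≤ nuclearNorm Y := by
  obtain ⟨W, hWWt, hWtW, hYW⟩ := exists_orthogonal_transpose_mul_self_eq_diagonal Y
  set σsq := (isHermitian_conjTranspose_mul_self Y).eigenvalues
  have hcolY (j : Fin n) : ∑ i, (Y * W) i j ^ 2 = σsq j := by
    rw [← transpose_mul_self_apply_self, hYW, diagonal_apply_eq]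
  have hcolA (j : Fin n) : ∑ i, (A * W) i j ^ 2 ≤ 1 := by
    have hunit : (fun k => W k j) ⬝ᵥ (fun k => W k j) = 1 := by
      simpa [transpose_mul_self_apply_self, dotProduct, sq] using congrFun (congrFun hWtW j) j
    calc ∑ i, (A * W) i j ^ 2 = (A *ᵥ fun k => W k j) ⬝ᵥ (A *ᵥ fun k => W k j) := by
          simp only [dotProduct, mulVec, mul_apply, sq]
      _ ≤ 1 := hunit ▸ hA _
  have htrace : trace (Aᵀ * Y) = ∑ j, ∑ i, (A * W) i j * (Y * W) i j := by
    calc trace (Aᵀ * Y) = trace (Aᵀ * Y * (W * Wᵀ)) := by rw [hWWt, Matrix.mul_one]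
      _ = trace ((A * W)ᵀ * (Y * W)) := by
          rw [transpose_mul, ← Matrix.mul_assoc, trace_mul_comm]
          simp only [Matrix.mul_assoc]
      _ = _ := by simp only [trace, diag_apply, mul_apply, transpose_apply]
  rw [htrace, nuclearNorm]
  refine Finset.sum_le_sum fun j _ => ?_
  calc ∑ i, (A * W) i j * (Y * W) i j
      ≤ √(∑ i, (A * W) i j ^ 2) * √(∑ i, (Y * W) i j ^ 2) :=
        Real.sum_mul_le_sqrt_mul_sqrt _ _ _
    _ ≤ 1 * √(σsq j) := by
        rw [hcolY]
        gcongr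
        exact Real.sqrt_le_one.mpr (hcolA j)
    _ = √(σsq j) := one_mul _

end NuclearNorm

section RectDiag

def IsRectDiag {α : Type*} [Zero α] (A : Matrix (Fin m) (Fin n) α) : Prop :=
  ∀ (i : Fin m) (j : Fin n), (i : ℕ) ≠ j → A i j = 0

def rectDiagPart {α : Type*} [Zero α] (A : Matrix (Fin m) (Fin n) α) :
    Matrix (Fin m) (Fin n) α :=
  of fun i j => if (i : ℕ) = j then A i j else 0

lemma isRectDiag_rectDiagPart {α : Type*} [Zero α] (A : Matrix (Fin m) (Fin n) α) :
    IsRectDiag (rectDiagPart A) :=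
  fun _ _ h => if_neg h

namespace IsRectDiag

variable {A B : Matrix (Fin m) (Fin n) ℝ}

lemma transpose_mul_eq_diagonal (hA : IsRectDiag A) (hB : IsRectDiag B) :
    Aᵀ * B = diagonal fun j => ∑ i, A i j * B i j := by
  ext k l
  rcases eq_or_ne k l with rfl | hkl
  · simp [mul_apply]
  · rw [diagonal_apply_ne _ hkl, mul_apply]
    refine Finset.sum_eq_zero fun i _ => ?_
    by_cases hik : (i : ℕ) = k
    · rw [transpose_apply, hB i l fun hil => hkl (Fin.ext (hik.symm.trans hil)), mul_zero]
    · rw [transpose_apply, hA i k hik, zero_mul]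

lemma nuclearNorm_eq_sum_abs (hA : IsRectDiag A) : nuclearNorm A = ∑ i, ∑ j, |A i j| := by
  rw [nuclearNorm_eq_sum_sqrt_of_transpose_mul_self_eq_diagonal
    (hA.transpose_mul_eq_diagonal hA), Finset.sum_comm]
  refine Finset.sum_congr rfl fun j _ => ?_
  rw [sum_fin_eq_dite_of_eq_zero (k := j) fun i hi => by rw [hA i j hi, mul_zero],
    sum_fin_eq_dite_of_eq_zero (k := j) fun i hi => by rw [hA i j hi, abs_zero]]
  split_ifs
  · exact Real.sqrt_mul_self_eq_abs _
  · exact Real.sqrt_zero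

lemma dotProduct_mulVec_self_le (hA : IsRectDiag A) (hA1 : ∀ i j, |A i j| ≤ 1)
    (v : Fin n → ℝ) : (A *ᵥ v) ⬝ᵥ (A *ᵥ v) ≤ v ⬝ᵥ v := by
  have hcol (j : Fin n) : ∑ i, A i j * A i j ≤ 1 := by
    rw [sum_fin_eq_dite_of_eq_zero (k := j) fun i hi => by rw [hA i j hi, mul_zero]]
    split_ifs
    · exact abs_le_one_iff_mul_self_le_one.1 (hA1 _ _)
    · exact zero_le_one
  have hgram : (A *ᵥ v) ⬝ᵥ (A *ᵥ v) = v ⬝ᵥ ((Aᵀ * A) *ᵥ v) := by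
    rw [← mulVec_mulVec, dotProduct_mulVec v, vecMul_transpose]
  rw [hgram, hA.transpose_mul_eq_diagonal hA]
  refine Finset.sum_le_sum fun j _ => ?_
  rw [mulVec_diagonal, mul_left_comm]
  exact mul_le_of_le_one_left (mul_self_nonneg _) (hcol j)

end IsRectDiag

lemma nuclearNorm_rectDiagPart_le (Y : Matrix (Fin m) (Fin n) ℝ) :
    nuclearNorm (rectDiagPart Y) ≤ nuclearNorm Y := by
  set A : Matrix (Fin m) (Fin n) ℝ := of fun i j => SignType.sign (rectDiagPart Y i j)
  have hA : IsRectDiag A := fun i j h => by simp [A, isRectDiag_rectDiagPart Y i j h]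
  have hA1 : ∀ i j, |A i j| ≤ 1 := fun i j => by
    simp only [A, of_apply]; rcases SignType.sign (rectDiagPart Y i j) with _ | _ | _ <;> simp
  calc nuclearNorm (rectDiagPart Y) = trace (Aᵀ * Y) := by
        rw [(isRectDiag_rectDiagPart Y).nuclearNorm_eq_sum_abs, trace, Finset.sum_comm]
        simp only [diag_apply, mul_apply, transpose_apply]
        refine Finset.sum_congr rfl fun j _ => Finset.sum_congr rfl fun i _ => ?_
        by_cases h : (i : ℕ) = j <;> simp [A, rectDiagPart, h]
    _ ≤ nuclearNorm Y := trace_transpose_mul_le_nuclearNorm (hA.dotProduct_mulVec_self_le hA1)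

end RectDiag

section FrobNorm

lemma frobNorm_sq (A : Matrix (Fin m) (Fin n) ℝ) : frobNorm A ^ 2 = ∑ i, ∑ j, A i j ^ 2 :=
  Real.sq_sqrt (by positivity)

lemma frobNorm_sq_eq_trace (A : Matrix (Fin m) (Fin n) ℝ) : frobNorm A ^ 2 = trace (Aᵀ * A) := by
  rw [frobNorm_sq, Finset.sum_comm, trace]
  simp only [diag_apply, transpose_mul_self_apply_self]

lemma frobNorm_eq_zero_iff {A : Matrix (Fin m) (Fin n) ℝ} : frobNorm A = 0 ↔ A = 0 := by
  rw [← pow_eq_zero_iff two_ne_zero, frobNorm_sq_eq_trace, ← conjTranspose_eq_transpose_of_trivial,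
    trace_conjTranspose_mul_self_eq_zero_iff]

lemma frobNorm_orthogonal_conj {U : Matrix (Fin m) (Fin m) ℝ} {V : Matrix (Fin n) (Fin n) ℝ}
    (hU : Uᵀ * U = 1) (hV : Vᵀ * V = 1) (Z : Matrix (Fin m) (Fin n) ℝ) :
    frobNorm (U * Z * Vᵀ) = frobNorm Z := by
  rw [frobNorm, frobNorm, ← frobNorm_sq, ← frobNorm_sq, frobNorm_sq_eq_trace,
    frobNorm_sq_eq_trace, transpose_mul_orthogonal_conj hU, trace_mul_cycle, hV, Matrix.one_mul]

end FrobNorm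

section Prox

lemma soft_threshold_strong_prox {τ s : ℝ} (hτ : 0 ≤ τ) (hs : 0 ≤ s) (y : ℝ) :
    τ * |max (s - τ) 0| + (1 / 2) * (max (s - τ) 0 - s) ^ 2 + (1 / 2) * (y - max (s - τ) 0) ^ 2 ≤
      τ * |y| + (1 / 2) * (y - s) ^ 2 := by
  rcases le_or_gt s τ with h | h
  · rw [max_eq_right (by linarith), abs_zero]
    nlinarith [abs_nonneg y, le_abs_self y, neg_abs_le y]
  · rw [max_eq_left (by linarith), abs_of_pos (by linarith)]
    nlinarith [le_abs_self y]

noncomputable def softThreshold (τ : ℝ) (S : Matrix (Fin m) (Fin n) ℝ) : Matrix (Fin m) (Fin n) ℝ :=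
  of fun i j => max (S i j - τ) 0

noncomputable def nuclearProxObjective (τ : ℝ) (T X : Matrix (Fin m) (Fin n) ℝ) : ℝ :=
  τ * nuclearNorm X + (1 / 2) * frobNorm (X - T) ^ 2

lemma nuclearProxObjective_orthogonal_conj {U : Matrix (Fin m) (Fin m) ℝ}
    {V : Matrix (Fin n) (Fin n) ℝ} (hU : Uᵀ * U = 1) (hV : Vᵀ * V = 1) (τ : ℝ)
    (S Y : Matrix (Fin m) (Fin n) ℝ) :
    nuclearProxObjective τ (U * S * Vᵀ) (U * Y * Vᵀ) = nuclearProxObjective τ S Y := by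
  rw [nuclearProxObjective, nuclearProxObjective, ← Matrix.sub_mul, ← Matrix.mul_sub,
    nuclearNorm_orthogonal_conj hU hV, frobNorm_orthogonal_conj hU hV]

lemma nuclearProxObjective_softThreshold_add_le {τ : ℝ} (hτ : 0 ≤ τ)
    {S : Matrix (Fin m) (Fin n) ℝ} (hS : IsRectDiag S) (hSnn : ∀ i j, 0 ≤ S i j)
    (Y : Matrix (Fin m) (Fin n) ℝ) :
    nuclearProxObjective τ S (softThreshold τ S) +
        (1 / 2) * frobNorm (Y - softThreshold τ S) ^ 2 ≤ nuclearProxObjective τ S Y := by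
  set D := softThreshold τ S
  set P := rectDiagPart Y
  have hP : IsRectDiag P := isRectDiag_rectDiagPart Y
  have hD : IsRectDiag D := fun i j h => by simp [D, softThreshold, hS i j h, hτ]
  have hentry (i : Fin m) (j : Fin n) :
      τ * |D i j| + (1 / 2) * (D i j - S i j) ^ 2 + (1 / 2) * (Y i j - D i j) ^ 2 ≤
        τ * |P i j| + (1 / 2) * (Y i j - S i j) ^ 2 := by
    by_cases h : (i : ℕ) = j
    · simpa [D, softThreshold, P, rectDiagPart, h] using
        soft_threshold_strong_prox hτ (hSnn i j) (Y i j)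
    · simp [P, rectDiagPart, h, hD i j h, hS i j h]
  calc nuclearProxObjective τ S D + (1 / 2) * frobNorm (Y - D) ^ 2
      = ∑ i, ∑ j,
          (τ * |D i j| + (1 / 2) * (D i j - S i j) ^ 2 + (1 / 2) * (Y i j - D i j) ^ 2) := by
        simp only [nuclearProxObjective, hD.nuclearNorm_eq_sum_abs, frobNorm_sq, Matrix.sub_apply,
          Finset.sum_add_distrib, Finset.mul_sum]
    _ ≤ ∑ i, ∑ j, (τ * |P i j| + (1 / 2) * (Y i j - S i j) ^ 2) :=
        Finset.sum_le_sum fun i _ => Finset.sum_le_sum fun j _ => hentry i j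
    _ = τ * nuclearNorm P + (1 / 2) * frobNorm (Y - S) ^ 2 := by
        simp only [hP.nuclearNorm_eq_sum_abs, frobNorm_sq, Matrix.sub_apply,
          Finset.sum_add_distrib, Finset.mul_sum]
    _ ≤ nuclearProxObjective τ S Y := by
        unfold nuclearProxObjective
        gcongr
        exact nuclearNorm_rectDiagPart_le Y

lemma nuclearProxObjective_svt_add_le {τ : ℝ} (hτ : 0 ≤ τ) {U : Matrix (Fin m) (Fin m) ℝ}
    {V : Matrix (Fin n) (Fin n) ℝ} (hU : Uᵀ * U = 1) (hV : Vᵀ * V = 1)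
    {S : Matrix (Fin m) (Fin n) ℝ} (hS : IsRectDiag S) (hSnn : ∀ i j, 0 ≤ S i j)
    (X : Matrix (Fin m) (Fin n) ℝ) :
    nuclearProxObjective τ (U * S * Vᵀ) (U * softThreshold τ S * Vᵀ) +
        (1 / 2) * frobNorm (X - U * softThreshold τ S * Vᵀ) ^ 2 ≤
      nuclearProxObjective τ (U * S * Vᵀ) X := by
  have hX : X = U * (Uᵀ * X * V) * Vᵀ := by
    simp only [← Matrix.mul_assoc, mul_eq_one_comm.mp hU, Matrix.one_mul]
    rw [Matrix.mul_assoc, mul_eq_one_comm.mp hV, Matrix.mul_one]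
  rw [hX, ← Matrix.sub_mul, ← Matrix.mul_sub, frobNorm_orthogonal_conj hU hV,
    nuclearProxObjective_orthogonal_conj hU hV, nuclearProxObjective_orthogonal_conj hU hV]
  exact nuclearProxObjective_softThreshold_add_le hτ hS hSnn _

end Prox

/-- Singular value thresholding solves the nuclear-norm proximal problem:
if `T = U * S * Vᵀ` with `U, V` orthogonal and `S` (rectangular) diagonal with
nonnegative entries, and `τ > 0`, then `SVT_τ(T) := U * max(S − τ, 0) * Vᵀ`
is the unique minimizer of `X ↦ τ‖X‖_* + ½‖X − T‖_F²`. -/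
theorem svt_is_prox_of_nuclearNorm {m n : ℕ} (τ : ℝ) (hτ : 0 < τ)
    (T : Matrix (Fin m) (Fin n) ℝ)
    (U : Matrix (Fin m) (Fin m) ℝ) (V : Matrix (Fin n) (Fin n) ℝ)
    (S : Matrix (Fin m) (Fin n) ℝ)
    (hU : Uᵀ * U = 1) (hV : Vᵀ * V = 1)
    (hSdiag : ∀ (i : Fin m) (j : Fin n), (i : ℕ) ≠ (j : ℕ) → S i j = 0)
    (hSnn : ∀ i j, 0 ≤ S i j)
    (hT : T = U * S * Vᵀ) :
    (∀ X : Matrix (Fin m) (Fin n) ℝ,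
        τ * nuclearNorm (U * (Matrix.of fun i j => max (S i j - τ) 0) * Vᵀ) +
            (1 / 2) * frobNorm (U * (Matrix.of fun i j => max (S i j - τ) 0) * Vᵀ - T) ^ 2 ≤
          τ * nuclearNorm X + (1 / 2) * frobNorm (X - T) ^ 2) ∧
      ∀ X : Matrix (Fin m) (Fin n) ℝ,
        τ * nuclearNorm X + (1 / 2) * frobNorm (X - T) ^ 2 =
            τ * nuclearNorm (U * (Matrix.of fun i j => max (S i j - τ) 0) * Vᵀ) +
              (1 / 2) * frobNorm (U * (Matrix.of fun i j => max (S i j - τ) 0) * Vᵀ - T) ^ 2 →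
          X = U * (Matrix.of fun i j => max (S i j - τ) 0) * Vᵀ := by
  subst hT
  have hmin := nuclearProxObjective_svt_add_le hτ.le hU hV hSdiag hSnn
  refine ⟨fun X => le_of_add_le_of_nonneg_left (hmin X) (by positivity), fun X hX => ?_⟩
  have hdist : (1 / 2) * frobNorm (X - U * softThreshold τ S * Vᵀ) ^ 2 ≤ 0 :=
    (add_le_iff_nonpos_right _).mp ((hmin X).trans_eq hX)
  have hzero : frobNorm (X - U * softThreshold τ S * Vᵀ) = 0 :=
    pow_eq_zero_iff two_ne_zero |>.mp (le_antisymm (by linarith) (sq_nonneg _))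
  exact sub_eq_zero.mp (frobNorm_eq_zero_iff.mp hzero)
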